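/- Let uv be an edge of a finite simple graph G and let H be the 3-subdivision of uv, with new vertices u′, w, v′. If the edge uv is γ-critical in G, i.e., γ(G − uv) = γ(G) + 1, then the edges uu′ and v′v are γ-critical in H, i.e., γ(H − uu′) = γ(H) + 1 and γ(H − v′v) = γ(H) + 1. -/

import Mathlib

open SimpleGraph

/-- `S` is a dominating set of `G`. -/
def IsDomSet {V : Type*} (G : SimpleGraph V) (S : Finset V) : Prop :=
  ∀ v : V, v ∈ S ∨ ∃ u ∈ S, G.Adj u v

/-- The domination number `γ(G)`. -/
noncomputable def domNum {V : Type*} (G : SimpleGraph V) : ℕ :=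
  sInf {n | ∃ S : Finset V, IsDomSet G S ∧ S.card = n}

/-- `C` is a vertex cover of `G`. -/
def IsVC {V : Type*} (G : SimpleGraph V) (C : Finset V) : Prop :=
  ∀ e ∈ G.edgeSet, ∃ x ∈ C, x ∈ e

/-- The vertex cover number `τ(G)`. -/
noncomputable def tau {V : Type*} (G : SimpleGraph V) : ℕ :=
  sInf {n | ∃ C : Finset V, IsVC G C ∧ C.card = n}

/-- `S` is an independent set of `G`. -/
def IsIndep {V : Type*} (G : SimpleGraph V) (S : Finset V) : Prop :=
  ∀ a ∈ S, ∀ b ∈ S, ¬ G.Adj a b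

/-- The independence number `α(G)`. -/
noncomputable def indepNum {V : Type*} (G : SimpleGraph V) : ℕ :=
  sSup {n | ∃ S : Finset V, IsIndep G S ∧ S.card = n}

/-- The bondage number `b(G)`. -/
noncomputable def bondage {V : Type*} (G : SimpleGraph V) : ℕ :=
  sInf {n | ∃ E' : Finset (Sym2 V), ↑E' ⊆ G.edgeSet ∧ E'.card = n ∧
    domNum (G.deleteEdges ↑E') = domNum G + 1}

/-- The graph `G_v+u` obtained from `G` by adding one new vertex (`none`) adjacent only to `v`. -/
def addLeaf {V : Type*} (G : SimpleGraph V) (v : V) : SimpleGraph (Option V) :=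
  SimpleGraph.fromRel (fun x y =>
    (∃ a b, x = some a ∧ y = some b ∧ G.Adj a b) ∨ (x = some v ∧ y = none))

/-- The graph `G_A+` obtained from `G` by adding, for each `v ∈ A`, one new pendant
vertex adjacent only to `v`. -/
def addLeaves {V : Type*} (G : SimpleGraph V) (A : Finset V) :
    SimpleGraph (V ⊕ {x // x ∈ A}) :=
  SimpleGraph.fromRel (fun x y =>
    (∃ a b, x = Sum.inl a ∧ y = Sum.inl b ∧ G.Adj a b) ∨
    (∃ a : {x // x ∈ A}, x = Sum.inl a.1 ∧ y = Sum.inr a))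

/-- The `3`-subdivision of the edge `uv` of `G`: the edge `uv` is deleted, three new
vertices `u' = Sum.inr 0`, `w = Sum.inr 1`, `v' = Sum.inr 2` are added, together with the
four edges `u u'`, `u' w`, `w v'`, `v' v`. -/
def subdiv3 {V : Type*} (G : SimpleGraph V) (u v : V) : SimpleGraph (V ⊕ Fin 3) :=
  SimpleGraph.fromRel (fun x y =>
    match x, y with
    | Sum.inl a, Sum.inl b => G.Adj a b ∧ s(a, b) ≠ s(u, v)
    | Sum.inl a, Sum.inr i => (a = u ∧ i = 0) ∨ (a = v ∧ i = 2)
    | Sum.inr i, Sum.inr j => (i = 0 ∧ j = 1) ∨ (i = 1 ∧ j = 2)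
    | _, _ => False)

/-!
Write `H` for the 3-subdivision. Extending a minimum dominating set `S` of `G` by one path
vertex (`v'` if `u ∈ S`, `u'` if `v ∈ S`, `w` otherwise) dominates `H`, so `γ(H) ≤ γ(G) + 1`.
In `H - uu'` the vertex `u'` is a leaf at `w`, so a dominating set contains `u'` or `w`;
replacing `v'` by `v` and dropping `u'` and `w` leaves a dominating set of `G - uv`. Hence
`γ(H - uu') ≥ γ(G - uv) + 1 = γ(G) + 2 ≥ γ(H) + 1`, and deleting an edge raises the domination
number by at most one. The edge `v'v` is the edge `uu'` after reversing the path.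
-/

open Finset Sum

section Domination

variable {V W : Type*} {G : SimpleGraph V} {G' : SimpleGraph W}

lemma domNum_le {S : Finset V} (hS : IsDomSet G S) : domNum G ≤ #S :=
  Nat.sInf_le ⟨S, hS, rfl⟩

lemma exists_isDomSet_card_eq_domNum [Fintype V] (G : SimpleGraph V) :
    ∃ S : Finset V, IsDomSet G S ∧ #S = domNum G :=
  Nat.sInf_mem (s := {n | ∃ S : Finset V, IsDomSet G S ∧ #S = n})
    ⟨_, univ, fun v => Or.inl (mem_univ v), rfl⟩

lemma le_domNum [Fintype V] {n : ℕ} (h : ∀ S, IsDomSet G S → n ≤ #S) : n ≤ domNum G := by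
  obtain ⟨S, hS, hcard⟩ := exists_isDomSet_card_eq_domNum G
  exact hcard ▸ h S hS

lemma IsDomSet.map {S : Finset V} (hS : IsDomSet G S) (f : G ≃g G') :
    IsDomSet G' (S.map f.toEquiv.toEmbedding) := by
  intro w
  obtain ⟨a, rfl⟩ := f.surjective w
  rcases hS a with ha | ⟨b, hb, hba⟩
  · exact Or.inl (mem_map_of_mem _ ha)
  · exact Or.inr ⟨f b, mem_map_of_mem _ hb, f.map_adj_iff.2 hba⟩

lemma domNum_congr (f : G ≃g G') : domNum G = domNum G' := by
  unfold domNum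
  congr 1
  ext n
  constructor
  · rintro ⟨S, hS, rfl⟩
    exact ⟨_, hS.map f, card_map _⟩
  · rintro ⟨S, hS, rfl⟩
    exact ⟨_, hS.map f.symm, card_map _⟩

lemma domNum_deleteEdges_congr (f : G ≃g G') (x y : V) :
    domNum (G.deleteEdges {s(x, y)}) = domNum (G'.deleteEdges {s(f x, f y)}) :=
  domNum_congr
    { toEquiv := f.toEquiv
      map_rel_iff' := by
        intro a b
        simp only [SimpleGraph.deleteEdges_adj, Set.mem_singleton_iff]
        exact and_congr f.map_adj_iff
          ((Sym2.map.injective f.injective).eq_iff (a := s(a, b)) (b := s(x, y))).not }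

lemma domNum_deleteEdges_le [Fintype V] (G : SimpleGraph V) (x y : V) :
    domNum (G.deleteEdges {s(x, y)}) ≤ domNum G + 1 := by
  classical
  obtain ⟨D, hD, hcard⟩ := exists_isDomSet_card_eq_domNum G
  -- if `x ∈ D`, only `y` can lose its dominator; otherwise only `x` can
  set z := if x ∈ D then y else x
  have hdom : IsDomSet (G.deleteEdges {s(x, y)}) (insert z D) := by
    intro a
    rcases hD a with ha | ⟨b, hb, hba⟩
    · exact Or.inl (mem_insert_of_mem ha)
    by_cases he : s(b, a) = s(x, y)
    · rcases Sym2.eq_iff.1 he with ⟨rfl, rfl⟩ | ⟨rfl, rfl⟩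
      · simp [z, hb]
      · by_cases ha : a ∈ D <;> simp [z, ha]
    · exact Or.inr ⟨b, mem_insert_of_mem hb, by simpa [he] using hba⟩
  calc domNum (G.deleteEdges {s(x, y)}) ≤ #(insert z D) := domNum_le hdom
    _ ≤ domNum G + 1 := hcard ▸ card_insert_le z D

end Domination

section SubdivisionAdj

variable {V : Type*} {G : SimpleGraph V} {u v a b : V} {i j : Fin 3}

@[simp]
lemma subdiv3_adj_inl_inl :
    (subdiv3 G u v).Adj (inl a) (inl b) ↔ G.Adj a b ∧ s(a, b) ≠ s(u, v) := by
  simp only [subdiv3, SimpleGraph.fromRel_adj]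
  constructor
  · rintro ⟨-, h | ⟨hba, hne⟩⟩
    · exact h
    · exact ⟨hba.symm, by rwa [Sym2.eq_swap]⟩
  · exact fun h => ⟨by simp [h.1.ne], Or.inl h⟩

@[simp]
lemma subdiv3_adj_inl_inr :
    (subdiv3 G u v).Adj (inl a) (inr i) ↔ a = u ∧ i = 0 ∨ a = v ∧ i = 2 := by
  simp [subdiv3]

@[simp]
lemma subdiv3_adj_inr_inl :
    (subdiv3 G u v).Adj (inr i) (inl a) ↔ a = u ∧ i = 0 ∨ a = v ∧ i = 2 := by
  rw [SimpleGraph.adj_comm, subdiv3_adj_inl_inr]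

@[simp]
lemma subdiv3_adj_inr_inr :
    (subdiv3 G u v).Adj (inr i) (inr j) ↔ s(i, j) = s(0, 1) ∨ s(i, j) = s(1, 2) := by
  fin_cases i <;> fin_cases j <;> simp [subdiv3]

end SubdivisionAdj

def subdiv3Swap {V : Type*} (G : SimpleGraph V) (u v : V) :
    subdiv3 G u v ≃g subdiv3 G v u where
  toEquiv := Equiv.sumCongr (Equiv.refl V) Fin.revPerm
  map_rel_iff' := by
    rintro (x | k) (y | l)
    · simp [Sym2.eq_swap]
    · fin_cases l <;> simp
    · fin_cases k <;> simp
    · fin_cases k <;> fin_cases l <;> simp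

section SubdivisionDomination

variable {V : Type*} {G : SimpleGraph V} {u v : V}

lemma domNum_subdiv3_swap : domNum (subdiv3 G v u) = domNum (subdiv3 G u v) :=
  (domNum_congr (subdiv3Swap G u v)).symm

lemma domNum_subdiv3_deleteEdges_swap :
    domNum ((subdiv3 G u v).deleteEdges {s(inr 2, inl v)}) =
      domNum ((subdiv3 G v u).deleteEdges {s(inl v, inr 0)}) := by
  rw [domNum_deleteEdges_congr (subdiv3Swap G u v)]
  congr 3
  exact Sym2.eq_swap

lemma domNum_subdiv3_le_of_mem {S : Finset V} (hS : IsDomSet G S) (hu : u ∈ S) :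
    domNum (subdiv3 G u v) ≤ #S + 1 := by
  have hdom : IsDomSet (subdiv3 G u v) (S.disjSum {2}) := by
    rintro (a | i)
    · rcases hS a with ha | ⟨b, hb, hba⟩
      · exact Or.inl (inl_mem_disjSum.2 ha)
      by_cases he : s(b, a) = s(u, v)
      · rcases Sym2.eq_iff.1 he with ⟨rfl, rfl⟩ | ⟨rfl, rfl⟩
        · exact Or.inr ⟨inr 2, by simp⟩
        · exact Or.inl (inl_mem_disjSum.2 hu)
      · exact Or.inr ⟨inl b, inl_mem_disjSum.2 hb, by simpa [he] using hba⟩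
    · fin_cases i
      · exact Or.inr ⟨inl u, inl_mem_disjSum.2 hu, by simp⟩
      · exact Or.inr ⟨inr 2, by simp⟩
      · exact Or.inl (by simp)
  simpa using domNum_le hdom

lemma domNum_subdiv3_le_of_isDomSet_deleteEdges {S : Finset V}
    (hS : IsDomSet (G.deleteEdges {s(u, v)}) S) : domNum (subdiv3 G u v) ≤ #S + 1 := by
  have hdom : IsDomSet (subdiv3 G u v) (S.disjSum {1}) := by
    rintro (a | i)
    · rcases hS a with ha | ⟨b, hb, hba⟩
      · exact Or.inl (inl_mem_disjSum.2 ha)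
      · exact Or.inr ⟨inl b, inl_mem_disjSum.2 hb, by simpa using hba⟩
    · fin_cases i
      exacts [Or.inr ⟨inr 1, by simp⟩, Or.inl (by simp), Or.inr ⟨inr 1, by simp⟩]
  simpa using domNum_le hdom

lemma domNum_subdiv3_le [Fintype V] (G : SimpleGraph V) (u v : V) :
    domNum (subdiv3 G u v) ≤ domNum G + 1 := by
  obtain ⟨S, hS, hcard⟩ := exists_isDomSet_card_eq_domNum G
  rw [← hcard]
  by_cases hu : u ∈ S
  · exact domNum_subdiv3_le_of_mem hS hu
  by_cases hv : v ∈ S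
  · exact domNum_subdiv3_swap ▸ domNum_subdiv3_le_of_mem hS hv
  refine domNum_subdiv3_le_of_isDomSet_deleteEdges fun a => ?_
  rcases hS a with ha | ⟨b, hb, hba⟩
  · exact Or.inl ha
  · refine Or.inr ⟨b, hb, SimpleGraph.deleteEdges_adj.2 ⟨hba, fun he => ?_⟩⟩
    rcases Sym2.eq_iff.1 he with ⟨rfl, -⟩ | ⟨rfl, -⟩
    exacts [hu hb, hv hb]

lemma domNum_deleteEdges_lt_domNum_subdiv3_deleteEdges [Fintype V] (G : SimpleGraph V)
    (u v : V) :
    domNum (G.deleteEdges {s(u, v)}) <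
      domNum ((subdiv3 G u v).deleteEdges {s(inl u, inr 0)}) := by
  classical
  refine le_domNum fun D hD => ?_
  have hV : ∀ a, a ∈ D.toLeft ∨ (∃ b ∈ D.toLeft, (G.deleteEdges {s(u, v)}).Adj b a) ∨
      (a = v ∧ 2 ∈ D.toRight) := by
    intro a
    rcases hD (inl a) with ha | ⟨x | i, hx, hxa⟩
    · exact Or.inl (mem_toLeft.2 ha)
    · exact Or.inr (Or.inl ⟨x, mem_toLeft.2 hx, by simpa using hxa⟩)
    · fin_cases i <;> simp at hxa
      exact Or.inr (Or.inr ⟨hxa, mem_toRight.2 hx⟩)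
  obtain ⟨j, hj, hj2⟩ : ∃ j ∈ D.toRight, j ≠ 2 := by
    rcases hD (inr 0) with h | ⟨x | i, hx, hxa⟩
    · exact ⟨0, mem_toRight.2 h, by decide⟩
    · simp at hxa
    · fin_cases i <;> simp at hxa
      exact ⟨1, mem_toRight.2 hx, by decide⟩
  -- replace `v'` by `v`, drop `u'` and `w`
  set R := D.toRight.filter (· = 2)
  have hS : IsDomSet (G.deleteEdges {s(u, v)}) (D.toLeft ∪ R.image fun _ => v) := by
    intro a
    rcases hV a with ha | ⟨b, hb, hba⟩ | ⟨rfl, h2⟩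
    · exact Or.inl (mem_union_left _ ha)
    · exact Or.inr ⟨b, mem_union_left _ hb, hba⟩
    · exact Or.inl (mem_union_right _ (mem_image_of_mem _ (mem_filter.2 ⟨h2, rfl⟩)))
  have hR : #R < #D.toRight := card_lt_card (filter_ssubset.2 ⟨j, hj, hj2⟩)
  calc domNum (G.deleteEdges {s(u, v)}) + 1
      ≤ #D.toLeft + #R + 1 := by
        grw [domNum_le hS, card_union_le, card_image_le]
    _ ≤ #D := by rw [← card_toLeft_add_card_toRight (u := D)]; omega

lemma domNum_subdiv3_deleteEdges_eq_of_critical [Fintype V]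
    (hcrit : domNum (G.deleteEdges {s(u, v)}) = domNum G + 1) :
    domNum ((subdiv3 G u v).deleteEdges {s(inl u, inr 0)}) = domNum (subdiv3 G u v) + 1 := by
  have hH := domNum_subdiv3_le G u v
  have hlower := domNum_deleteEdges_lt_domNum_subdiv3_deleteEdges G u v
  exact le_antisymm (domNum_deleteEdges_le _ _ _) (by omega)

end SubdivisionDomination

theorem stmt7_general {V : Type*} [Fintype V] (G : SimpleGraph V)
    (u v : V)
    (hcrit : domNum (G.deleteEdges {s(u, v)}) = domNum G + 1) :
    domNum ((subdiv3 G u v).deleteEdges {s(Sum.inl u, (Sum.inr 0 : V ⊕ Fin 3))}) =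
        domNum (subdiv3 G u v) + 1 ∧
    domNum ((subdiv3 G u v).deleteEdges {s((Sum.inr 2 : V ⊕ Fin 3), Sum.inl v)}) =
        domNum (subdiv3 G u v) + 1 := by
  refine ⟨domNum_subdiv3_deleteEdges_eq_of_critical hcrit, ?_⟩
  rw [domNum_subdiv3_deleteEdges_swap, ← domNum_subdiv3_swap]
  exact domNum_subdiv3_deleteEdges_eq_of_critical (by rwa [Sym2.eq_swap])

/-- If the edge `uv` is `γ`-critical in `G` and `H` is the `3`-subdivision of `uv`
(with new vertices `u' = Sum.inr 0`, `w = Sum.inr 1`, `v' = Sum.inr 2`), then the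
edges `u u'` and `v' v` are `γ`-critical in `H`. -/
theorem stmt7 {V : Type*} [Fintype V] [DecidableEq V] (G : SimpleGraph V)
    (u v : V) (huv : G.Adj u v)
    (hcrit : domNum (G.deleteEdges {s(u, v)}) = domNum G + 1) :
    domNum ((subdiv3 G u v).deleteEdges {s(Sum.inl u, (Sum.inr 0 : V ⊕ Fin 3))}) =
        domNum (subdiv3 G u v) + 1 ∧
    domNum ((subdiv3 G u v).deleteEdges {s((Sum.inr 2 : V ⊕ Fin 3), Sum.inl v)}) =
        domNum (subdiv3 G u v) + 1 :=
  stmt7_general G u v hcrit
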